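/- arXiv:0907.2949 — 2 statements merged into one kernel-verified Lean document; each statement's English description precedes it below -/
import Mathlib

section
/- Let X = {0,1}. The solitude-verification family of functions (f_n : X^n → {0,1})_{n≥1} defined by f_n(x) = 1 if |{i : x_i = 1}| = 1 and f_n(x) = 0 otherwise, is not computable with infinite memory. -/
/-- A finite bidirectional connected network on `n` nodes, with port labelings:
each node `i` has a bijection between its neighbors and the port numbers
`{0, …, deg(i) - 1}`. -/
structure PortNetwork (n : ℕ) where
  adj : Fin n → Fin n → Bool
  symm : ∀ i j, adj i j → adj j i
  loopless : ∀ i, ¬ adj i i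
  connected : ∀ i j : Fin n, Relation.ReflTransGen (fun a b => adj a b) i j
  port : ∀ i : Fin n, {j // adj i j} ≃ Fin (Fintype.card {j // adj i j})

/-- The degree of node `i`. -/
def PortNetwork.deg {n : ℕ} (N : PortNetwork n) (i : Fin n) : ℕ :=
  Fintype.card {j // N.adj i j}

/-- An algorithm: a family of transition functions
`A_d : X × Z_d × Y × M^d → Z_d × Y × M^d`, together with the distinguished
initial ("∅") elements of `Z_d`, `Y`, `M`. -/
structure Algorithm (X Y M : Type) (Z : ℕ → Type) where
  trans : ∀ d : ℕ, X → Z d → Y → (Fin d → M) → Z d × Y × (Fin d → M)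
  z0 : ∀ d, Z d
  y0 : Y
  m0 : M

/-- The synchronous evolution of the network: `A.run N x t i` is the state
`(z_i(t), y_i(t), (m_{i,p}(t))_p)` of node `i` at time `t`, starting from
initial values `x`.  At each round, node `i` receives through its `k`-th port
the message sent by the neighbor `j_k` on that port, namely the message that
`j_k` put on its own port leading back to `i`. -/
def Algorithm.run {X Y M : Type} {Z : ℕ → Type} (A : Algorithm X Y M Z) {n : ℕ}
    (N : PortNetwork n) (x : Fin n → X) :
    ℕ → ∀ i : Fin n, Z (N.deg i) × Y × (Fin (N.deg i) → M)
  | 0 => fun _ => (A.z0 _, A.y0, fun _ => A.m0)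
  | t + 1 => fun i =>
      A.trans (N.deg i) (x i) (A.run N x t i).1 (A.run N x t i).2.1
        (fun k =>
          let j := (N.port i).symm k
          (A.run N x t j.1).2.2 (N.port j.1 ⟨i, N.symm _ _ j.2⟩))

/-- `y` is the final output of the execution of `A` on the network `N` with
initial values `x`. -/
def Algorithm.FinalOutput {X Y M : Type} {Z : ℕ → Type} (A : Algorithm X Y M Z) {n : ℕ}
    (N : PortNetwork n) (x : Fin n → X) (y : Y) : Prop :=
  ∃ t', ∀ t, t' ≤ t → ∀ i, (A.run N x t i).2.1 = y

/-- A family of functions `(f_n : X^n → Y)_{n ≥ 1}` is computable if there is an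
algorithm with `Y`, `M` and all `Z_d` finite which, on every connected network
with ports and every input, produces the final output `f_n(x)`. -/
def ComputableFamily {X Y : Type} (f : ∀ n, (Fin n → X) → Y) : Prop :=
  ∃ (M : Type) (Z : ℕ → Type) (A : Algorithm X Y M Z),
    Finite Y ∧ Finite M ∧ (∀ d, Finite (Z d)) ∧
    ∀ n, 0 < n → ∀ (N : PortNetwork n) (x : Fin n → X),
      A.FinalOutput N x (f n x)

/-- Computability with infinite memory: `Y` and the `Z_d` are allowed to be
countable (the message alphabet `M` stays finite). -/
def ComputableWithInfiniteMemory {X Y : Type} (f : ∀ n, (Fin n → X) → Y) : Prop :=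
  ∃ (M : Type) (Z : ℕ → Type) (A : Algorithm X Y M Z),
    Countable Y ∧ Finite M ∧ (∀ d, Countable (Z d)) ∧
    ∀ n, 0 < n → ∀ (N : PortNetwork n) (x : Fin n → X),
      A.FinalOutput N x (f n x)

/-! Anonymous algorithms cannot tell a network from a port-preserving cover of it: by induction on
time, a node of the cover and its image run through the same states, so the final outputs on a
network and on a cover with the lifted input agree, whatever the memory. The hexagon covers the
triangle by `i ↦ i mod 3`, and the triangle input with a single `1` lifts to a hexagon input with
two `1`s, on which solitude verification must answer differently. -/

namespace PortNetwork

variable {n m : ℕ}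

def nbr (N : PortNetwork n) (i : Fin n) (k : Fin (N.deg i)) : Fin n :=
  ((N.port i).symm k).1

def backPort (N : PortNetwork n) (i : Fin n) (k : Fin (N.deg i)) : Fin (N.deg (N.nbr i k)) :=
  N.port (N.nbr i k) ⟨i, N.symm _ _ ((N.port i).symm k).2⟩

structure Covering (N : PortNetwork n) (N' : PortNetwork m) where
  toFun : Fin n → Fin m
  deg_eq : ∀ i, N.deg i = N'.deg (toFun i)
  nbr_eq : ∀ i k, toFun (N.nbr i k) = N'.nbr (toFun i) (Fin.cast (deg_eq i) k)
  backPort_eq : ∀ i k,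
    (N.backPort i k : ℕ) = N'.backPort (toFun i) (Fin.cast (deg_eq i) k)

end PortNetwork

namespace Algorithm

variable {X Y M : Type} {Z : ℕ → Type} (A : Algorithm X Y M Z) {n m : ℕ}

theorem run_succ (N : PortNetwork n) (x : Fin n → X) (t : ℕ) (i : Fin n) :
    A.run N x (t + 1) i =
      A.trans (N.deg i) (x i) (A.run N x t i).1 (A.run N x t i).2.1
        (fun k => (A.run N x t (N.nbr i k)).2.2 (N.backPort i k)) :=
  rfl

section StateHEq

variable {d d' : ℕ} {s : Z d × Y × (Fin d → M)} {s' : Z d' × Y × (Fin d' → M)}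

theorem trans_heq (h : d = d') (hs : HEq s s') (a : X) {μ : Fin d → M} {μ' : Fin d' → M}
    (hμ : HEq μ μ') : HEq (A.trans d a s.1 s.2.1 μ) (A.trans d' a s'.1 s'.2.1 μ') := by
  subst h; cases hs; cases hμ; rfl

theorem output_eq_of_heq (h : d = d') (hs : HEq s s') : s.2.1 = s'.2.1 := by
  subst h; cases hs; rfl

theorem message_eq_of_heq (h : d = d') (hs : HEq s s') {p : Fin d} {p' : Fin d'}
    (hp : (p : ℕ) = p') : s.2.2 p = s'.2.2 p' := by
  subst h; cases hs; rw [Fin.ext hp]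

end StateHEq

theorem run_heq_of_covering {N : PortNetwork n} {N' : PortNetwork m} (C : N.Covering N')
    (x' : Fin m → X) (t : ℕ) (i : Fin n) :
    HEq (A.run N (x' ∘ C.toFun) t i) (A.run N' x' t (C.toFun i)) := by
  induction t generalizing i with
  | zero =>
    change HEq (A.z0 _, A.y0, fun _ => A.m0) (A.z0 _, A.y0, fun _ => A.m0)
    rw [C.deg_eq i]
  | succ t ih =>
    rw [run_succ, run_succ]
    refine A.trans_heq (C.deg_eq i) (ih i) _ ((Fin.heq_fun_iff (C.deg_eq i)).2 fun k => ?_)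
    have hnbr := C.nbr_eq i k
    exact message_eq_of_heq (hnbr ▸ C.deg_eq _) (hnbr ▸ ih (N.nbr i k)) (C.backPort_eq i k)

theorem FinalOutput.eq_of_covering {A : Algorithm X Y M Z} {N : PortNetwork n}
    {N' : PortNetwork m} (C : N.Covering N') [NeZero n] {x' : Fin m → X} {y y' : Y}
    (h : A.FinalOutput N (x' ∘ C.toFun) y) (h' : A.FinalOutput N' x' y') : y = y' := by
  obtain ⟨t, ht⟩ := h
  obtain ⟨t', ht'⟩ := h'
  calc y = (A.run N (x' ∘ C.toFun) (max t t') 0).2.1 := (ht _ (le_max_left _ _) 0).symm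
    _ = (A.run N' x' (max t t') (C.toFun 0)).2.1 :=
      output_eq_of_heq (C.deg_eq 0) (A.run_heq_of_covering C x' _ 0)
    _ = y' := ht' _ (le_max_right _ _) _

end Algorithm

def equivFinTwo {α : Type} [DecidableEq α] (P : α → Prop) {a b : α} (ha : P a) (hb : P b)
    (hab : a ≠ b) (hP : ∀ j, P j → j = a ∨ j = b) : {j // P j} ≃ Fin 2 where
  toFun j := if j.1 = a then 0 else 1
  invFun k := if k = 0 then ⟨a, ha⟩ else ⟨b, hb⟩
  left_inv j := by
    rcases hP j.1 j.2 with h | h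
    · simp [Subtype.ext_iff, h]
    · simp [Subtype.ext_iff, h, Ne.symm hab]
  right_inv k := by
    fin_cases k <;> simp [Ne.symm hab]

section Cycle

open Fin.CommRing

variable {n : ℕ} [NeZero n]

def cycleAdj (n : ℕ) [NeZero n] (i j : Fin n) : Bool := decide (j = i + 1) || decide (i = j + 1)

theorem cycleAdj_iff {i j : Fin n} : cycleAdj n i j ↔ j = i + 1 ∨ j = i - 1 := by
  simp only [cycleAdj, Bool.or_eq_true, decide_eq_true_eq]
  rw [eq_sub_iff_add_eq, eq_comm (a := j + 1)]

theorem cycleAdj_symm (i j : Fin n) : cycleAdj n i j → cycleAdj n j i := by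
  simp [cycleAdj, Bool.or_comm]

theorem cycleAdj_irrefl (hn : 2 ≤ n) (i : Fin n) : ¬ cycleAdj n i i := by
  have : (1 : Fin n) ≠ 0 := by rw [Ne, Fin.one_eq_zero_iff]; omega
  simpa [cycleAdj] using fun h : i = i + 1 => this (by linear_combination -h)

theorem cycleAdj_connected (i j : Fin n) :
    Relation.ReflTransGen (fun a b => cycleAdj n a b) i j := by
  have step (a : Fin n) : Relation.ReflTransGen (fun a b => cycleAdj n a b) a (a + 1) :=
    .single (by simp [cycleAdj])
  have reach (k : ℕ) : Relation.ReflTransGen (fun a b => cycleAdj n a b) i (i + k) := by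
    induction k with
    | zero => simpa using .refl
    | succ k ih => simpa [add_assoc] using ih.trans (step _)
  simpa using reach (j - i).val

theorem Fin.add_one_ne_sub_one (hn : 3 ≤ n) (i : Fin n) : i + 1 ≠ i - 1 := by
  intro h
  have h2 : (1 : Fin n) + 1 = 0 := by linear_combination h
  have hval := congrArg Fin.val h2
  rw [Fin.val_add, Fin.val_one', Nat.one_mod_eq_one.2 (by omega), Nat.mod_eq_of_lt (by omega),
    Fin.val_zero] at hval
  omega

def cyclePort (hn : 3 ≤ n) (i : Fin n) : {j // cycleAdj n i j} ≃ Fin 2 :=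
  equivFinTwo _ (cycleAdj_iff.2 (.inl rfl)) (cycleAdj_iff.2 (.inr rfl))
    (Fin.add_one_ne_sub_one hn i) fun _ => cycleAdj_iff.1

/-- The `n`-cycle; port `0` of node `i` leads to `i + 1`, port `1` to `i - 1`. -/
def PortNetwork.cycle (n : ℕ) [NeZero n] (hn : 3 ≤ n) : PortNetwork n where
  adj := cycleAdj n
  symm := cycleAdj_symm
  loopless := cycleAdj_irrefl (by omega)
  connected := cycleAdj_connected
  port i := (cyclePort hn i).trans
    (finCongr ((Fintype.card_congr (cyclePort hn i)).trans (Fintype.card_fin 2)).symm)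

end Cycle

def hexagonCoversTriangle :
    (PortNetwork.cycle 6 (by norm_num)).Covering (PortNetwork.cycle 3 (by norm_num)) where
  toFun i := ⟨i % 3, Nat.mod_lt _ (by norm_num)⟩
  deg_eq := by decide
  nbr_eq := by decide
  backPort_eq := by decide

/-- solitude verification (deciding whether exactly one node has
initial value 1) is not computable with infinite memory. -/
theorem solitude_verification_not_computable :
    ¬ ComputableWithInfiniteMemory
      (fun n (x : Fin n → Fin 2) =>
        if (Finset.univ.filter fun i => x i = 1).card = 1 then (1 : Fin 2) else 0) := by
  rintro ⟨M, Z, A, -, -, -, hA⟩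
  let C := hexagonCoversTriangle
  let x : Fin 3 → Fin 2 := Pi.single 0 1
  have hsame := (hA 6 (by norm_num) _ (x ∘ C.toFun)).eq_of_covering C (hA 3 (by norm_num) _ x)
  exact absurd hsame (by decide)
end

section
/- Let X = {1,…,K} and let I, I' be arbitrary subsets of X. The family of functions (f_n : X^n → {0,1})_{n≥1} defined by f_n(x) = 1 if |{i : x_i ∈ I}| ≥ |{i : x_i ∈ I'}| and f_n(x) = 0 otherwise, is computable. -/
/-!
Every positive node starts with a plus token, every negative node with a minus token, and every
node with a probe. Tokens move by rotor-router: each round a node forwards its tokens of each kind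
over distinct ports, in cyclic port order, and keeps at most one. A negative node is a hole
absorbing one plus token, a positive node a hole absorbing one minus token; while its hole is open
a negative node destroys every probe it receives, and it emits a fresh probe when the hole is
filled. A node outputs 0 on receiving a minus token, and 1 on receiving a probe without one.

Every absorption lowers the potential "tokens + open holes", so from some time on nothing is
absorbed, and the finite global configuration is then eventually periodic. In the periodic regime
each kind of token present reaches every node, so no open hole coexists with the tokens it
absorbs. If #pos ≥ #neg, every plus hole gets filled, no minus token survives, and a probe
survives (the one created by the last filling, or an initial one); if #pos < #neg, a plus hole
stays open, so no probe survives, while minus tokens do.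
-/

open Finset

namespace PortNetwork

variable {n : ℕ} (N : PortNetwork n)

def arcEquivAdj : (Σ i, Fin (N.deg i)) ≃ {e : Fin n × Fin n // N.adj e.1 e.2} where
  toFun a := ⟨(a.1, ((N.port a.1).symm a.2).1), ((N.port a.1).symm a.2).2⟩
  invFun e := ⟨e.1.1, N.port e.1.1 ⟨e.1.2, e.2⟩⟩
  left_inv a := Sigma.ext rfl (heq_of_eq ((N.port a.1).apply_symm_apply a.2))
  right_inv e := by simp

/-- The reverse of the arc leaving `i` through port `k` is the arc by which the neighbour at the
other end sends to `i`, as in `Algorithm.run`. -/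
def reverseArc : Equiv.Perm (Σ i, Fin (N.deg i)) :=
  (N.arcEquivAdj.trans (Equiv.subtypeEquiv (Equiv.prodComm _ _)
    fun _ => ⟨N.symm _ _, N.symm _ _⟩)).trans N.arcEquivAdj.symm

@[simp]
theorem reverseArc_reverseArc (a : Σ i, Fin (N.deg i)) : N.reverseArc (N.reverseArc a) = a := by
  simp [reverseArc]

theorem reverseArc_port (j v : Fin n) (h : N.adj j v) :
    (N.reverseArc ⟨j, N.port j ⟨v, h⟩⟩).1 = v := by
  simp [reverseArc, arcEquivAdj]

theorem deg_pos (hn : 2 ≤ n) (i : Fin n) : 0 < N.deg i := by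
  obtain ⟨j, hj⟩ := Fintype.exists_ne_of_one_lt_card (by simpa using Nat.lt_of_succ_le hn) i
  obtain rfl | ⟨k, hik, -⟩ := (N.connected i j).cases_head
  · exact absurd rfl hj
  · exact Fintype.card_pos_iff.mpr ⟨⟨k, hik⟩⟩

theorem deg_eq_zero (N : PortNetwork 1) (i : Fin 1) : N.deg i = 0 :=
  Fintype.card_eq_zero_iff.mpr ⟨fun ⟨j, hj⟩ => N.loopless i (Subsingleton.elim j i ▸ hj)⟩

end PortNetwork

namespace Algorithm

variable {X X' Y M : Type} {Z : ℕ → Type}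

def comapInput (g : X' → X) (A : Algorithm X Y M Z) : Algorithm X' Y M Z :=
  { A with trans := fun d x' => A.trans d (g x') }

theorem run_comapInput (g : X' → X) (A : Algorithm X Y M Z) {n : ℕ} (N : PortNetwork n)
    (x : Fin n → X') : (A.comapInput g).run N x = A.run N (g ∘ x) := by
  funext t
  induction t with
  | zero => rfl
  | succ t ih => simp only [run, ih]; rfl

theorem run_succ_eq_of_eq (A : Algorithm X Y M Z) {n : ℕ} (N : PortNetwork n) (x : Fin n → X)
    {s t : ℕ} (h : A.run N x s = A.run N x t) : A.run N x (s + 1) = A.run N x (t + 1) := by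
  simp only [run, h]

end Algorithm

theorem ComputableFamily.comp_input {X X' Y : Type} {f : ∀ n, (Fin n → X) → Y}
    (hf : ComputableFamily f) (g : X' → X) : ComputableFamily fun n x => f n (g ∘ x) := by
  obtain ⟨M, Z, A, hY, hM, hZ, hA⟩ := hf
  refine ⟨M, Z, A.comapInput g, hY, hM, hZ, fun n hn N x => ?_⟩
  simpa [Algorithm.FinalOutput, Algorithm.run_comapInput] using hA n hn N (g ∘ x)

theorem exists_periodic_of_finite {α : Type*} [Finite α] (u : ℕ → α)
    (hu : ∀ s t, u s = u t → u (s + 1) = u (t + 1)) (T₀ : ℕ) :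
    ∃ T, T₀ ≤ T ∧ ∃ p, 0 < p ∧ ∀ t, T ≤ t → u (t + p) = u t := by
  obtain ⟨a, b, hab, heq⟩ := Finite.exists_ne_map_eq_of_infinite fun k => u (T₀ + k)
  wlog hlt : a < b generalizing a b
  · exact this b a hab.symm heq.symm (by omega)
  refine ⟨T₀ + a, by omega, b - a, by omega, fun t ht => ?_⟩
  induction t, ht using Nat.le_induction with
  | base => simpa [show T₀ + a + (b - a) = T₀ + b by omega] using heq.symm
  | succ t _ ih => simpa [Nat.add_right_comm] using hu _ _ ih

theorem apply_add_mod_of_periodic_from {α : Type*} {f : ℕ → α} {T p : ℕ}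
    (hf : ∀ t, T ≤ t → f (t + p) = f t) {t : ℕ} (ht : T ≤ t) :
    f (T + (t - T) % p) = f t := by
  have hper : Function.Periodic (fun k => f (T + k)) p := fun k => by
    simpa [add_assoc] using hf (T + k) (by omega)
  simpa [show T + (t - T) = t by omega] using hper.map_mod_nat (t - T)

theorem card_filter_exists_add_mod {d e : ℕ} (ρ : ℕ) (he : e ≤ d) :
    #{k : Fin d | ∃ m < e, (ρ + m) % d = k} = e := by
  rcases Nat.eq_zero_or_pos d with rfl | hd
  · simp_all
  have : NeZero d := ⟨hd.ne'⟩
  have himage : ({k : Fin d | ∃ m < e, (ρ + m) % d = k} : Finset (Fin d)) =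
      (range e).image fun m => Fin.ofNat d (ρ + m) := by
    ext k
    simp [Fin.ext_iff, eq_comm]
  rw [himage, card_image_of_injOn, card_range]
  intro m₁ h₁ m₂ h₂ h
  have h' : (ρ + m₁) % d = (ρ + m₂) % d := by simpa [Fin.ext_iff] using h
  have hmod := Nat.ModEq.add_left_cancel' ρ h'
  simp only [coe_range, Set.mem_Iio] at h₁ h₂
  rwa [Nat.ModEq, Nat.mod_eq_of_lt (by omega), Nat.mod_eq_of_lt (by omega)] at hmod

theorem exists_add_mod_eq_of_lt_sum {d : ℕ} (r e : ℕ → ℕ) (p : ℕ)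
    (hr : ∀ u < p, r u = (r 0 + ∑ v ∈ range u, e v) % d) :
    ∀ j < ∑ u ∈ range p, e u, ∃ u < p, ∃ m < e u, (r u + m) % d = (r 0 + j) % d := by
  induction p with
  | zero => simp
  | succ p ih =>
    intro j hj
    rw [sum_range_succ] at hj
    by_cases hjp : j < ∑ u ∈ range p, e u
    · obtain ⟨u, hu, m, hm, h⟩ := ih (fun u hu => hr u (by omega)) j hjp
      exact ⟨u, by omega, m, hm, h⟩
    · refine ⟨p, by omega, j - ∑ u ∈ range p, e u, by omega, ?_⟩
      rw [hr p (by omega), Nat.mod_add_mod]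
      congr 1
      omega

theorem rotor_coverage {d p : ℕ} (hd : 0 < d) (r e : ℕ → ℕ)
    (hstep : ∀ u < p, r (u + 1) = (r u + e u) % d) (hr₀ : r 0 < d) (hperiod : r p = r 0)
    (hpos : 0 < ∑ u ∈ range p, e u) (k : ℕ) (hk : k < d) :
    ∃ u < p, ∃ m < e u, (r u + m) % d = k := by
  have hr : ∀ u ≤ p, r u = (r 0 + ∑ v ∈ range u, e v) % d := by
    intro u hu
    induction u with
    | zero => simp [Nat.mod_eq_of_lt hr₀]
    | succ u ih =>
      rw [hstep u (by omega), ih (by omega), Nat.mod_add_mod, sum_range_succ, add_assoc]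
  -- returning to `r 0` after `p` rounds forces the rotor to have made at least one full turn
  have hdvd : d ∣ ∑ u ∈ range p, e u := by
    have h : r 0 + ∑ u ∈ range p, e u ≡ r 0 + 0 [MOD d] := by
      rw [Nat.ModEq, ← hr p le_rfl, hperiod, add_zero, Nat.mod_eq_of_lt hr₀]
    exact (Nat.modEq_zero_iff_dvd).mp (Nat.ModEq.add_left_cancel' _ h)
  have hturn := Nat.le_of_dvd hpos hdvd
  obtain ⟨u, hu, m, hm, h⟩ := exists_add_mod_eq_of_lt_sum r e p (fun u hu => hr u hu.le)
    ((k + (d - r 0)) % d) (by have := Nat.mod_lt (k + (d - r 0)) hd; omega)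
  refine ⟨u, hu, m, hm, ?_⟩
  rw [h, Nat.add_mod_mod, show r 0 + (k + (d - r 0)) = k + d by omega, Nat.add_mod_right,
    Nat.mod_eq_of_lt hk]

namespace SignTokens

inductive Token
  | plus
  | minus
  | probe
  deriving DecidableEq

instance : Fintype Token :=
  ⟨{.plus, .minus, .probe}, fun τ => by cases τ <;> decide⟩

theorem sum_token {M : Type*} [AddCommMonoid M] (f : Token → M) :
    ∑ τ, f τ = f .plus + f .minus + f .probe := by
  rw [show (univ : Finset Token) = {.plus, .minus, .probe} from rfl, sum_insert (by decide),
    sum_pair (by decide), add_assoc]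

/-- At most one token of each kind crosses an edge per round. -/
abbrev Msg : Type := Token → Bool

structure NodeState (d : ℕ) where
  absorbsPlus : Bool
  absorbsMinus : Bool
  hold : Token → Bool
  /-- Read modulo `d`; the extra value keeps the type inhabited when `d = 0`. -/
  rotor : Token → Fin (d + 1)

instance (d : ℕ) : Finite (NodeState d) :=
  Finite.of_injective (fun s : NodeState d => (s.absorbsPlus, s.absorbsMinus, s.hold, s.rotor))
    fun ⟨_, _, _, _⟩ ⟨_, _, _, _⟩ h => by simp_all

def received {d : ℕ} (inbox : Fin d → Msg) (τ : Token) : ℕ :=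
  ∑ k, (inbox k τ).toNat

theorem received_le {d : ℕ} (inbox : Fin d → Msg) (τ : Token) : received inbox τ ≤ d := by
  simpa [received] using sum_le_card_nsmul univ (fun k => (inbox k τ).toNat) 1
    fun k _ => Bool.toNat_le _

namespace NodeState

variable {d : ℕ} (s : NodeState d) (r : Token → ℕ)

def init (d : ℕ) (σ : SignType) : NodeState d where
  absorbsPlus := σ = .neg
  absorbsMinus := σ = .pos
  hold
    | .plus => σ = .pos
    | .minus => σ = .neg
    | .probe => true
  rotor _ := 0

def absorbs : Token → Bool
  | .plus => s.absorbsPlus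
  | .minus => s.absorbsMinus
  | .probe => s.absorbsPlus

def absorbed : Token → ℕ
  | .plus => if s.absorbsPlus ∧ 0 < r .plus then 1 else 0
  | .minus => if s.absorbsMinus ∧ 0 < r .minus then 1 else 0
  | .probe => if s.absorbsPlus then r .probe else 0

def created : Token → ℕ
  | .probe => s.absorbed r .plus
  | _ => 0

def load (τ : Token) : ℕ :=
  (s.hold τ).toNat + (r τ - s.absorbed r τ) + s.created r τ

def emitted (τ : Token) : ℕ :=
  min (s.load r τ) d

def next : NodeState d where
  absorbsPlus := s.absorbsPlus && r .plus = 0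
  absorbsMinus := s.absorbsMinus && r .minus = 0
  hold τ := d < s.load r τ
  rotor τ := Fin.ofNat (d + 1) ((s.rotor τ + s.emitted r τ) % d)

def sends : Fin d → Msg :=
  fun k τ => ∃ m < s.emitted r τ, (s.rotor τ + m) % d = k

def output (y : Fin 2) : Fin 2 :=
  if d = 0 then (if s.absorbsPlus then 0 else 1)
  else if 0 < r .minus then 0 else if 0 < r .probe then 1 else y

theorem absorbed_le (τ : Token) : s.absorbed r τ ≤ r τ := by
  cases τ <;> simp only [absorbed] <;> split <;> omega

theorem absorbed_pos {τ : Token} (hτ : s.absorbs τ) (hr : 0 < r τ) : 0 < s.absorbed r τ := by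
  cases τ <;> simp_all [absorbs, absorbed]

theorem load_add_absorbed (τ : Token) :
    s.load r τ + s.absorbed r τ = (s.hold τ).toNat + r τ + s.created r τ := by
  have := s.absorbed_le r τ
  simp only [load]
  omega

theorem load_le (hr : ∀ τ, r τ ≤ d) (τ : Token) : s.load r τ ≤ d + 1 := by
  have := hr τ
  have := hr .plus
  have := Bool.toNat_le (s.hold τ)
  cases τ <;> simp only [load, created, absorbed] <;> grind

theorem hold_next_add_sends (hr : ∀ τ, r τ ≤ d) (τ : Token) :
    ((s.next r).hold τ).toNat + ∑ k, (s.sends r k τ).toNat = s.load r τ := by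
  have hsends : ∑ k, (s.sends r k τ).toNat = s.emitted r τ := by
    rw [emitted, ← card_filter_exists_add_mod (s.rotor τ) (min_le_right (s.load r τ) d),
      card_filter]
    refine sum_congr rfl fun k _ => ?_
    split_ifs with h
    · rw [sends, emitted, decide_eq_true h]; rfl
    · rw [sends, emitted, decide_eq_false h]; rfl
  have := s.load_le r hr τ
  rw [hsends]
  by_cases h : d < s.load r τ <;> simp [next, emitted, h] <;> omega

theorem absorbsPlus_next :
    (s.next r).absorbsPlus.toNat + s.absorbed r .plus = s.absorbsPlus.toNat := by
  cases h : s.absorbsPlus <;> by_cases hr : r .plus = 0 <;> simp [next, absorbed, h, hr]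

theorem absorbsMinus_next :
    (s.next r).absorbsMinus.toNat + s.absorbed r .minus = s.absorbsMinus.toNat := by
  cases h : s.absorbsMinus <;> by_cases hr : r .minus = 0 <;> simp [next, absorbed, h, hr]

theorem absorbs_next (hplus : s.absorbed r .plus = 0) (hminus : s.absorbed r .minus = 0)
    (τ : Token) : (s.next r).absorbs τ = s.absorbs τ := by
  simp only [absorbed, ite_eq_right_iff, one_ne_zero, imp_false, not_and, not_lt,
    Nat.le_zero] at hplus hminus
  cases τ <;> cases h : s.absorbsPlus <;> cases h' : s.absorbsMinus <;> simp_all [absorbs, next]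

theorem rotor_next (hd : 0 < d) (τ : Token) :
    ((s.next r).rotor τ : ℕ) = (s.rotor τ + s.emitted r τ) % d := by
  simp only [next, Fin.val_ofNat]
  exact Nat.mod_eq_of_lt (by have := Nat.mod_lt (s.rotor τ + s.emitted r τ) hd; omega)

end NodeState

/-- The memory starts blank (`none`), since `z0` cannot depend on the input; the input is read
through `NodeState.init` in the first round. -/
def algorithm : Algorithm SignType (Fin 2) Msg (fun d => Option (NodeState d)) where
  trans d σ z y inbox :=
    let s := z.getD (.init d σ)
    (some (s.next (received inbox)), s.output (received inbox) y, s.sends (received inbox))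
  z0 _ := none
  y0 := 0
  m0 _ := false

section Execution

variable {n : ℕ} (N : PortNetwork n) (σ : Fin n → SignType)

def state (t : ℕ) (i : Fin n) : NodeState (N.deg i) :=
  (algorithm.run N σ t i).1.getD (.init _ (σ i))

def output (t : ℕ) (i : Fin n) : Fin 2 :=
  (algorithm.run N σ t i).2.1

def sent (t : ℕ) (i : Fin n) : Fin (N.deg i) → Msg :=
  (algorithm.run N σ t i).2.2

def recv (t : ℕ) (i : Fin n) : Token → ℕ :=
  received fun k => sent N σ t (N.reverseArc ⟨i, k⟩).1 (N.reverseArc ⟨i, k⟩).2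

def absorbed (t : ℕ) (i : Fin n) (τ : Token) : ℕ :=
  (state N σ t i).absorbed (recv N σ t i) τ

def created (t : ℕ) (i : Fin n) (τ : Token) : ℕ :=
  (state N σ t i).created (recv N σ t i) τ

def load (t : ℕ) (i : Fin n) (τ : Token) : ℕ :=
  (state N σ t i).load (recv N σ t i) τ

def emitted (t : ℕ) (i : Fin n) (τ : Token) : ℕ :=
  (state N σ t i).emitted (recv N σ t i) τ

def tokens (t : ℕ) (τ : Token) : ℕ :=
  ∑ i, ((state N σ t i).hold τ).toNat + ∑ i, ∑ k, (sent N σ t i k τ).toNat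

def holesPlus (t : ℕ) : ℕ :=
  ∑ i, (state N σ t i).absorbsPlus.toNat

def holesMinus (t : ℕ) : ℕ :=
  ∑ i, (state N σ t i).absorbsMinus.toNat

def potential (t : ℕ) : ℕ :=
  ∑ τ, tokens N σ t τ + holesPlus N σ t + holesMinus N σ t

def count (v : SignType) : ℕ :=
  ∑ i, (decide (σ i = v)).toNat

theorem state_zero (i : Fin n) : state N σ 0 i = .init _ (σ i) := rfl

theorem sent_zero (i : Fin n) (k : Fin (N.deg i)) : sent N σ 0 i k = fun _ => false := rfl

theorem state_succ (t : ℕ) (i : Fin n) :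
    state N σ (t + 1) i = (state N σ t i).next (recv N σ t i) := rfl

theorem sent_succ (t : ℕ) (i : Fin n) :
    sent N σ (t + 1) i = (state N σ t i).sends (recv N σ t i) := rfl

theorem output_succ (t : ℕ) (i : Fin n) :
    output N σ (t + 1) i = (state N σ t i).output (recv N σ t i) (output N σ t i) := rfl

theorem sum_recv (t : ℕ) (τ : Token) :
    ∑ i, recv N σ t i τ = ∑ i, ∑ k, (sent N σ t i k τ).toNat := by
  simp only [recv, received]
  rw [← Fintype.sum_sigma' (fun i k => (sent N σ t (N.reverseArc ⟨i, k⟩).1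
    (N.reverseArc ⟨i, k⟩).2 τ).toNat), ← Fintype.sum_sigma']
  exact Equiv.sum_comp N.reverseArc fun a => (sent N σ t a.1 a.2 τ).toNat

theorem recv_pos_of_sent {t : ℕ} {j : Fin n} {q : Fin (N.deg j)} {τ : Token}
    (h : sent N σ t j q τ) : 0 < recv N σ t (N.reverseArc ⟨j, q⟩).1 τ := by
  refine lt_of_lt_of_le ?_
    (single_le_sum (fun k _ => Nat.zero_le _) (mem_univ (N.reverseArc ⟨j, q⟩).2))
  show 0 < (sent N σ t (N.reverseArc (N.reverseArc ⟨j, q⟩)).1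
    (N.reverseArc (N.reverseArc ⟨j, q⟩)).2 τ).toNat
  rw [N.reverseArc_reverseArc, h]
  exact Nat.one_pos

theorem recv_eq_zero_of_tokens_eq_zero {t : ℕ} {τ : Token} (h : tokens N σ t τ = 0)
    (i : Fin n) : recv N σ t i τ = 0 := by
  have := single_le_sum (fun j _ => Nat.zero_le (recv N σ t j τ)) (mem_univ i)
  rw [sum_recv] at this
  simp only [tokens] at h
  omega

theorem tokens_succ (t : ℕ) (τ : Token) : tokens N σ (t + 1) τ = ∑ i, load N σ t i τ := by
  rw [tokens, ← sum_add_distrib]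
  exact sum_congr rfl fun i _ => NodeState.hold_next_add_sends _ _ (received_le _) τ

theorem tokens_succ_add (t : ℕ) (τ : Token) :
    tokens N σ (t + 1) τ + ∑ i, absorbed N σ t i τ =
      tokens N σ t τ + ∑ i, created N σ t i τ := by
  rw [tokens_succ, ← sum_add_distrib]
  simp only [load, absorbed, NodeState.load_add_absorbed, sum_add_distrib, sum_recv]
  rfl

theorem holesPlus_succ_add (t : ℕ) :
    holesPlus N σ (t + 1) + ∑ i, absorbed N σ t i .plus = holesPlus N σ t := by
  rw [holesPlus, holesPlus, ← sum_add_distrib]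
  exact sum_congr rfl fun i _ => NodeState.absorbsPlus_next _ _

theorem holesMinus_succ_add (t : ℕ) :
    holesMinus N σ (t + 1) + ∑ i, absorbed N σ t i .minus = holesMinus N σ t := by
  rw [holesMinus, holesMinus, ← sum_add_distrib]
  exact sum_congr rfl fun i _ => NodeState.absorbsMinus_next _ _

theorem holesPlus_eq_zero_iff {t : ℕ} :
    holesPlus N σ t = 0 ↔ ∀ i, (state N σ t i).absorbsPlus = false := by
  simp [holesPlus, sum_eq_zero_iff]

theorem holesMinus_eq_zero_iff {t : ℕ} :
    holesMinus N σ t = 0 ↔ ∀ i, (state N σ t i).absorbsMinus = false := by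
  simp [holesMinus, sum_eq_zero_iff]

-- the only creation, that of a probe, comes with the absorption of a plus token
theorem potential_succ_add_le (t : ℕ) :
    potential N σ (t + 1) + ∑ τ, ∑ i, absorbed N σ t i τ ≤ potential N σ t := by
  have h₁ := tokens_succ_add N σ t .plus
  have h₂ := tokens_succ_add N σ t .minus
  have h₃ := tokens_succ_add N σ t .probe
  have h₄ := holesPlus_succ_add N σ t
  have h₅ := holesMinus_succ_add N σ t
  simp only [created, NodeState.created, absorbed, sum_const_zero] at h₁ h₂ h₃ h₄ h₅
  simp only [potential, sum_token, absorbed]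
  omega

theorem tokens_plus_add_count_neg (t : ℕ) :
    tokens N σ t .plus + count σ .neg = holesPlus N σ t + count σ .pos := by
  induction t with
  | zero => simp [tokens, holesPlus, count, state_zero, sent_zero, NodeState.init, add_comm]
  | succ t ih =>
    have h₁ := tokens_succ_add N σ t .plus
    have h₂ := holesPlus_succ_add N σ t
    simp only [created, NodeState.created, sum_const_zero] at h₁
    omega

theorem tokens_minus_add_count_pos (t : ℕ) :
    tokens N σ t .minus + count σ .pos = holesMinus N σ t + count σ .neg := by
  induction t with
  | zero => simp [tokens, holesMinus, count, state_zero, sent_zero, NodeState.init, add_comm]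
  | succ t ih =>
    have h₁ := tokens_succ_add N σ t .minus
    have h₂ := holesMinus_succ_add N σ t
    simp only [created, NodeState.created, sum_const_zero] at h₁
    omega

theorem tokens_probe_succ_of_holesPlus_eq_zero {t : ℕ} (h : holesPlus N σ t = 0) :
    tokens N σ (t + 1) .probe = tokens N σ t .probe := by
  have key := tokens_succ_add N σ t .probe
  have hzero : ∀ i, absorbed N σ t i .probe = 0 ∧ created N σ t i .probe = 0 := fun i => by
    simp [absorbed, created, NodeState.absorbed, NodeState.created,
      (holesPlus_eq_zero_iff N σ).mp h i]
  rw [sum_eq_zero fun i _ => (hzero i).1, sum_eq_zero fun i _ => (hzero i).2] at key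
  omega

theorem tokens_probe_pos (hn : 0 < n) {T : ℕ} (hT : holesPlus N σ T = 0) :
    0 < tokens N σ T .probe := by
  have hex : ∃ t, holesPlus N σ t = 0 := ⟨T, hT⟩
  have hstart : 0 < tokens N σ (Nat.find hex) .probe := by
    rcases h : Nat.find hex with _ | u
    · simpa [tokens, state_zero, sent_zero, NodeState.init] using hn
    · -- the filling of the last plus hole creates a probe
      have hu : holesPlus N σ u ≠ 0 := Nat.find_min hex (by omega)
      have hu' : holesPlus N σ (u + 1) = 0 := h ▸ Nat.find_spec hex
      have hsum := holesPlus_succ_add N σ u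
      obtain ⟨i, -, hi⟩ := exists_ne_zero_of_sum_ne_zero (s := univ)
        (f := fun i => absorbed N σ u i .plus) (by omega)
      rw [tokens_succ]
      refine lt_of_lt_of_le ?_ (single_le_sum (fun j _ => Nat.zero_le _) (mem_univ i))
      simp only [load, NodeState.load, NodeState.created]
      exact lt_of_lt_of_le (Nat.pos_of_ne_zero hi) (Nat.le_add_left _ _)
  have hanti : Antitone (holesPlus N σ) := antitone_nat_of_succ_le fun t => by
    have := holesPlus_succ_add N σ t
    omega
  have hconst : ∀ t, Nat.find hex ≤ t →
      tokens N σ t .probe = tokens N σ (Nat.find hex) .probe := by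
    intro t ht
    induction t, ht using Nat.le_induction with
    | base => rfl
    | succ t ht ih =>
      have hholes : holesPlus N σ t = 0 :=
        Nat.eq_zero_of_le_zero ((hanti ht).trans (Nat.find_spec hex).le)
      rw [tokens_probe_succ_of_holesPlus_eq_zero N σ hholes, ih]
  rw [hconst T (Nat.find_min' hex hT)]
  exact hstart

def IsQuiescentFrom (T : ℕ) : Prop :=
  ∀ t, T ≤ t → ∀ i τ, absorbed N σ t i τ = 0

theorem exists_isQuiescentFrom : ∃ T, IsQuiescentFrom N σ T := by
  have hanti : Antitone (potential N σ) := antitone_nat_of_succ_le fun t => by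
    have := potential_succ_add_le N σ t
    omega
  obtain ⟨T, hT⟩ := WellFoundedLT.antitone_chain_condition hanti
  refine ⟨T, fun t ht i τ => ?_⟩
  have h := potential_succ_add_le N σ t
  rw [← hT t ht, ← hT (t + 1) (by omega)] at h
  have h0 : ∑ τ, ∑ i, absorbed N σ t i τ = 0 := by omega
  simp only [sum_eq_zero_iff, mem_univ, true_implies] at h0
  exact h0 τ i

variable {N σ}

theorem rotor_lt {i : Fin n} (hd : 0 < N.deg i) (t : ℕ) (τ : Token) :
    ((state N σ t i).rotor τ : ℕ) < N.deg i := by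
  cases t with
  | zero => exact hd
  | succ t =>
    rw [state_succ, NodeState.rotor_next _ _ hd]
    exact Nat.mod_lt _ hd

namespace IsQuiescentFrom

variable {T : ℕ} (hq : IsQuiescentFrom N σ T)
include hq

theorem mono {T' : ℕ} (h : T ≤ T') : IsQuiescentFrom N σ T' :=
  fun t ht => hq t (h.trans ht)

theorem tokens_eq {t : ℕ} (ht : T ≤ t) (τ : Token) : tokens N σ t τ = tokens N σ T τ := by
  induction t, ht using Nat.le_induction with
  | base => rfl
  | succ t ht ih =>
    have key := tokens_succ_add N σ t τ
    have hcreated : ∀ i, created N σ t i τ = 0 := fun i => by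
      cases τ <;> first | rfl | exact hq t ht i .plus
    rw [sum_eq_zero fun i _ => hq t ht i τ, sum_eq_zero fun i _ => hcreated i] at key
    omega

theorem absorbs_eq {t : ℕ} (ht : T ≤ t) (i : Fin n) (τ : Token) :
    (state N σ t i).absorbs τ = (state N σ T i).absorbs τ := by
  induction t, ht using Nat.le_induction with
  | base => rfl
  | succ t ht ih => rw [state_succ, NodeState.absorbs_next _ _ (hq t ht i _) (hq t ht i _), ih]

theorem emitted_pos {t : ℕ} (ht : T ≤ t) {i : Fin n} (hd : 0 < N.deg i) {τ : Token}
    (h : 0 < recv N σ t i τ) : 0 < emitted N σ t i τ := by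
  have := (state N σ t i).load_add_absorbed (recv N σ t i) τ
  rw [show (state N σ t i).absorbed (recv N σ t i) τ = 0 from hq t ht i τ] at this
  simp only [emitted, NodeState.emitted, lt_min_iff]
  omega

theorem exists_emitted_pos (hdeg : ∀ i, 0 < N.deg i) {τ : Token}
    (hτ : 0 < tokens N σ T τ) : ∃ j, 0 < emitted N σ T j τ := by
  rcases Nat.eq_zero_or_pos (∑ i, ((state N σ T i).hold τ).toNat) with hheld | hheld
  · obtain ⟨j, -, hj⟩ := exists_ne_zero_of_sum_ne_zero (s := univ)
      (f := fun j => ∑ k, (sent N σ T j k τ).toNat) (by simp only [tokens] at hτ; omega)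
    obtain ⟨q, -, hq'⟩ := exists_ne_zero_of_sum_ne_zero hj
    exact ⟨_, hq.emitted_pos le_rfl (hdeg _) (recv_pos_of_sent N σ (by simpa using hq'))⟩
  · obtain ⟨j, -, hj⟩ := exists_ne_zero_of_sum_ne_zero hheld.ne'
    refine ⟨j, ?_⟩
    simp only [emitted, NodeState.emitted, NodeState.load, lt_min_iff]
    exact ⟨by omega, hdeg j⟩

end IsQuiescentFrom

section Periodic

variable {T p : ℕ} (hper : ∀ t, T ≤ t → algorithm.run N σ (t + p) = algorithm.run N σ t)
include hper

theorem state_add_period {t : ℕ} (ht : T ≤ t) (i : Fin n) :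
    state N σ (t + p) i = state N σ t i := by
  simp only [state, hper t ht]

theorem emitted_add_period {t : ℕ} (ht : T ≤ t) (i : Fin n) (τ : Token) :
    emitted N σ (t + p) i τ = emitted N σ t i τ := by
  simp only [emitted, recv, sent, state, hper t ht]

theorem exists_sent_of_emitted_pos {j : Fin n} (hd : 0 < N.deg j) {m₀ : ℕ} (hm₀ : m₀ < p)
    {τ : Token} (he : 0 < emitted N σ (T + m₀) j τ) (q : Fin (N.deg j)) :
    ∃ m < p, sent N σ (T + m + 1) j q τ := by
  obtain ⟨u, hu, m, hm, h⟩ := rotor_coverage (p := p) hd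
    (fun u => ((state N σ (T + u) j).rotor τ : ℕ)) (fun u => emitted N σ (T + u) j τ)
    (fun u _ => by rw [← add_assoc, state_succ, NodeState.rotor_next _ _ hd]; rfl)
    (rotor_lt hd _ τ) (by simp only [add_zero]; rw [state_add_period hper le_rfl])
    (lt_of_lt_of_le he (single_le_sum (f := fun u => emitted N σ (T + u) j τ)
      (fun _ _ => Nat.zero_le _) (mem_range.mpr hm₀))) q q.isLt
  exact ⟨u, hu, by rw [sent_succ]; exact decide_eq_true ⟨m, hm, h⟩⟩

variable (hdeg : ∀ i, 0 < N.deg i) (hq : IsQuiescentFrom N σ T) (hp : 0 < p)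
include hdeg hq hp

/-- A node that emits once in the periodic regime emits in every period, so its rotor sweeps all
its ports; hence, by connectivity, every node emits, and every node receives. -/
theorem exists_recv_pos_of_tokens_pos {τ : Token} (hτ : 0 < tokens N σ T τ) (v : Fin n) :
    ∃ w, T < w ∧ w ≤ T + p ∧ 0 < recv N σ w v τ := by
  let Emits (j : Fin n) : Prop := ∃ t, T ≤ t ∧ 0 < emitted N σ t j τ
  have feeds : ∀ {j v}, N.adj j v → Emits j → ∃ m < p, 0 < recv N σ (T + m + 1) v τ := by
    rintro j v hjv ⟨t, ht, he⟩
    rw [← apply_add_mod_of_periodic_from (f := fun t => emitted N σ t j τ)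
      (fun t ht => emitted_add_period hper ht j τ) ht] at he
    obtain ⟨m, hm, hsent⟩ := exists_sent_of_emitted_pos hper (hdeg j) (Nat.mod_lt _ hp) he
      (N.port j ⟨v, hjv⟩)
    exact ⟨m, hm, N.reverseArc_port j v hjv ▸ recv_pos_of_sent N σ hsent⟩
  have hall : ∀ j, Emits j := by
    obtain ⟨j₀, hj₀⟩ := hq.exists_emitted_pos hdeg hτ
    intro j
    induction N.connected j₀ j with
    | refl => exact ⟨T, le_rfl, hj₀⟩
    | tail _ hadj ih =>
      obtain ⟨m, -, h⟩ := feeds hadj ih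
      exact ⟨_, by omega, hq.emitted_pos (by omega) (hdeg _) h⟩
  have hv : N.adj v ((N.port v).symm ⟨0, hdeg v⟩).1 := ((N.port v).symm ⟨0, hdeg v⟩).2
  obtain ⟨m, hm, h⟩ := feeds (N.symm _ _ hv) (hall _)
  exact ⟨T + m + 1, by omega, by omega, h⟩

theorem absorbs_eq_false_of_tokens_pos {τ : Token} (hτ : 0 < tokens N σ T τ) (i : Fin n) :
    (state N σ T i).absorbs τ = false := by
  obtain ⟨w, hw, -, hrecv⟩ := exists_recv_pos_of_tokens_pos hper hdeg hq hp hτ i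
  by_contra h
  have := (state N σ w i).absorbed_pos (recv N σ w i)
    (by rw [hq.absorbs_eq hw.le i τ]; simpa using h) hrecv
  exact this.ne' (hq w hw.le i τ)

end Periodic

theorem output_eq_one_of_recv {i : Fin n} (hd : 0 < N.deg i) {w : ℕ}
    (hminus : ∀ t, w ≤ t → recv N σ t i .minus = 0) (hprobe : 0 < recv N σ w i .probe) :
    ∀ t, w < t → output N σ t i = 1 := by
  intro t ht
  induction t, ht using Nat.le_induction with
  | base => simp [output_succ, NodeState.output, hd.ne', hminus w le_rfl, hprobe]
  | succ t ht ih => simp [output_succ, NodeState.output, hd.ne', hminus t (by omega), ih]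

theorem output_eq_zero_of_recv {i : Fin n} (hd : 0 < N.deg i) {w : ℕ}
    (hprobe : ∀ t, w ≤ t → recv N σ t i .probe = 0) (hminus : 0 < recv N σ w i .minus) :
    ∀ t, w < t → output N σ t i = 0 := by
  intro t ht
  induction t, ht using Nat.le_induction with
  | base => simp [output_succ, NodeState.output, hd.ne', hminus]
  | succ t ht ih => simp [output_succ, NodeState.output, hd.ne', hprobe t (by omega), ih]

end Execution

theorem eventually_output_eq_of_two_le {n : ℕ} (N : PortNetwork n) (σ : Fin n → SignType)
    (hn : 2 ≤ n) : ∃ t₀, ∀ t, t₀ ≤ t → ∀ i,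
      output N σ t i = if count σ .neg ≤ count σ .pos then 1 else 0 := by
  have hdeg := N.deg_pos hn
  obtain ⟨T₀, hq₀⟩ := exists_isQuiescentFrom N σ
  obtain ⟨T, hT, p, hp, hper⟩ := exists_periodic_of_finite (algorithm.run N σ)
    (fun _ _ => algorithm.run_succ_eq_of_eq N σ) T₀
  have hq := hq₀.mono hT
  have habsorbs : ∀ {τ}, 0 < tokens N σ T τ → ∀ i, (state N σ T i).absorbs τ = false :=
    absorbs_eq_false_of_tokens_pos hper hdeg hq hp
  have hreach : ∀ {τ}, 0 < tokens N σ T τ →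
      ∀ i, ∃ w, T < w ∧ w ≤ T + p ∧ 0 < recv N σ w i τ :=
    exists_recv_pos_of_tokens_pos hper hdeg hq hp
  have hplus := tokens_plus_add_count_neg N σ T
  have hminus := tokens_minus_add_count_pos N σ T
  refine ⟨T + p + 1, fun t ht i => ?_⟩
  split_ifs with h
  · have hholes : holesPlus N σ T = 0 := by
      rcases Nat.eq_zero_or_pos (tokens N σ T .plus) with h0 | hpos
      · omega
      · exact (holesPlus_eq_zero_iff N σ).mpr (habsorbs hpos)
    have hminus0 : tokens N σ T .minus = 0 := by
      by_contra hne
      have := (holesMinus_eq_zero_iff N σ).mpr (habsorbs (Nat.pos_of_ne_zero hne))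
      omega
    obtain ⟨w, hTw, hwp, hw⟩ := hreach (tokens_probe_pos N σ (by omega) hholes) i
    refine output_eq_one_of_recv (hdeg i) (fun t' ht' => ?_) hw t (by omega)
    exact recv_eq_zero_of_tokens_eq_zero N σ (by rw [hq.tokens_eq (by omega), hminus0]) i
  · have hprobe0 : tokens N σ T .probe = 0 := by
      by_contra hne
      have := (holesPlus_eq_zero_iff N σ).mpr (habsorbs (τ := .probe) (Nat.pos_of_ne_zero hne))
      omega
    obtain ⟨w, hTw, hwp, hw⟩ := hreach (τ := .minus) (by omega) i
    refine output_eq_zero_of_recv (hdeg i) (fun t' ht' => ?_) hw t (by omega)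
    exact recv_eq_zero_of_tokens_eq_zero N σ (by rw [hq.tokens_eq (by omega), hprobe0]) i

theorem output_of_one_node (N : PortNetwork 1) (σ : Fin 1 → SignType) {t : ℕ} (ht : 1 ≤ t)
    (i : Fin 1) : output N σ t i = if σ i = .neg then 0 else 1 := by
  have : IsEmpty (Fin (N.deg i)) := by rw [N.deg_eq_zero i]; infer_instance
  have hrecv : ∀ t, recv N σ t i = 0 := fun t => by
    funext τ
    simp [recv, received]
  have habsorbs : ∀ t, (state N σ t i).absorbsPlus = decide (σ i = .neg) := fun t => by
    induction t with
    | zero => rfl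
    | succ t ih => simp [state_succ, NodeState.next, hrecv, ih]
  obtain ⟨t, rfl⟩ := Nat.exists_eq_add_of_le' ht
  simp [output_succ, NodeState.output, N.deg_eq_zero i, habsorbs]

theorem sum_cast_eq_count_sub_count {n : ℕ} (σ : Fin n → SignType) :
    ∑ i, (σ i : ℤ) = count σ .pos - count σ .neg := by
  simp only [count, Nat.cast_sum, ← sum_sub_distrib]
  exact sum_congr rfl fun i _ => by cases σ i <;> rfl

theorem algorithm_finalOutput {n : ℕ} (hn : 0 < n) (N : PortNetwork n) (σ : Fin n → SignType) :
    algorithm.FinalOutput N σ (if 0 ≤ ∑ i, (σ i : ℤ) then 1 else 0) := by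
  have hcond : (0 ≤ ∑ i, (σ i : ℤ)) ↔ count σ .neg ≤ count σ .pos := by
    rw [sum_cast_eq_count_sub_count]
    omega
  simp only [hcond]
  obtain rfl | hn2 : n = 1 ∨ 2 ≤ n := by omega
  · refine ⟨1, fun t ht i => ?_⟩
    show output N σ t i = _
    rw [output_of_one_node N σ ht]
    cases h : σ i <;> simp [count, Fin.fin_one_eq_zero i ▸ h]
  · exact eventually_output_eq_of_two_le N σ hn2

theorem computableFamily_sum_nonneg :
    ComputableFamily fun n (σ : Fin n → SignType) =>
      if 0 ≤ ∑ i, (σ i : ℤ) then (1 : Fin 2) else 0 :=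
  ⟨Msg, _, algorithm, inferInstance, inferInstance, fun _ => inferInstance,
    fun _ hn N σ => algorithm_finalOutput hn N σ⟩

end SignTokens

/-- for arbitrary subsets `I, I'` of the alphabet, deciding
whether at least as many nodes have a value in `I` as have a value in `I'` is
computable. -/
theorem subset_count_comparison_computable (K : ℕ) (I I' : Finset (Fin K)) :
    ComputableFamily
      (fun n (x : Fin n → Fin K) =>
        if (Finset.univ.filter fun i => x i ∈ I').card ≤
            (Finset.univ.filter fun i => x i ∈ I).card
        then (1 : Fin 2) else 0) := by
  let g (a : Fin K) : SignType :=
    if a ∈ I then (if a ∈ I' then 0 else 1) else (if a ∈ I' then -1 else 0)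
  have hg (a : Fin K) : (g a : ℤ) = (if a ∈ I then 1 else 0) - (if a ∈ I' then 1 else 0) := by
    simp only [g]
    split_ifs <;> rfl
  convert SignTokens.computableFamily_sum_nonneg.comp_input g using 4 with n x
  simp only [Function.comp_apply, hg, sum_sub_distrib, ← natCast_card_filter, sub_nonneg,
    Nat.cast_le]
end
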